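/- Let n be a natural number and let a be a complex number such that 2a + j ≠ 0 for every integer j with 0 ≤ j ≤ 2n. Then ∑_{k=0}^{2n+1} ((-(2n+1))_k · (a)_k · 2^k) / ((2a)_k · k!) = 0, where (x)_k = x(x+1)⋯(x+k-1) is the Pochhammer symbol (rising factorial). -/

import Mathlib

/-- The Pochhammer symbol (rising factorial) `(x)_k = x(x+1)⋯(x+k-1)` for complex `x`. -/
noncomputable def poch (x : ℂ) (k : ℕ) : ℂ := ∏ j ∈ Finset.range k, (x + j)

/-!
Write `F(N) = ₂F₁(-N, a; 2a; 2) = ∑ₖ tₖ(N)`. The WZ-type certificate `G(k) = k (2a + k - 1) tₖ(N + 2)`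
satisfies `(N + 2)(2a + N + 1) tₖ(N + 2) - (N + 2)(N + 1) tₖ(N) = G(k) - G(k + 1)`, so summing over `k`
gives the contiguous relation `(2a + N + 1) F(N + 2) = (N + 1) F(N)`. Since `F(1) = 1 - 2a/(2a) = 0`,
induction on odd `N` gives `F(N) = 0`.
-/

open Finset Nat

namespace poch

lemma zero (x : ℂ) : poch x 0 = 1 := prod_range_zero _

lemma succ (x : ℂ) (k : ℕ) : poch x (k + 1) = poch x k * (x + k) := prod_range_succ _ _

lemma succ_eq_mul_add_one (x : ℂ) (k : ℕ) : poch x (k + 1) = x * poch (x + 1) k := by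
  rw [poch, prod_range_succ', poch]
  push_cast
  rw [add_zero, mul_comm]
  exact congrArg (x * ·) (prod_congr rfl fun j _ => by ring)

lemma neg_natCast_eq_zero {m k : ℕ} (h : m < k) : poch (-m) k = 0 :=
  prod_eq_zero (mem_range.mpr h) (by simp)

/-- Both sides are `(x)_{k+2}`. -/
lemma mul_add_mul_add_add_one (x : ℂ) (k : ℕ) :
    poch x k * ((x + k) * (x + k + 1)) = x * (x + 1) * poch (x + 2) k := by
  have h := (succ x (k + 1)).symm.trans (succ_eq_mul_add_one x (k + 1))
  rw [succ, succ_eq_mul_add_one (x + 1), add_assoc x 1 1, one_add_one_eq_two] at h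
  push_cast at h
  linear_combination h

end poch

noncomputable def hypergeomTerm (a : ℂ) (N k : ℕ) : ℂ :=
  poch (-N) k * poch a k * 2 ^ k / (poch (2 * a) k * k !)

noncomputable def hypergeomSum (a : ℂ) (N : ℕ) : ℂ :=
  ∑ k ∈ range (N + 1), hypergeomTerm a N k

lemma hypergeomTerm_eq_zero {a : ℂ} {N k : ℕ} (h : N < k) : hypergeomTerm a N k = 0 := by
  simp [hypergeomTerm, poch.neg_natCast_eq_zero h]

lemma hypergeomTerm_succ {a : ℂ} (N k : ℕ) (h : 2 * a + k ≠ 0) :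
    (k + 1) * (2 * a + k) * hypergeomTerm a N (k + 1)
      = 2 * (k - N) * (a + k) * hypergeomTerm a N k := by
  have ratio : hypergeomTerm a N (k + 1)
      = hypergeomTerm a N k * ((k - N) * (a + k) * 2 / ((2 * a + k) * (k + 1))) := by
    rw [hypergeomTerm, hypergeomTerm, _root_.div_mul_div_comm, poch.succ, poch.succ, poch.succ,
      factorial_succ, pow_succ]
    push_cast
    ring
  rw [ratio]
  field_simp

lemma hypergeomTerm_add_two (a : ℂ) (N k : ℕ) :
    (N + 2) * (N + 1) * hypergeomTerm a N k
      = (k - N - 2) * (k - N - 1) * hypergeomTerm a (N + 2) k := by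
  have h := poch.mul_add_mul_add_add_one (-(N + 2 : ℂ)) k
  rw [show -(N + 2 : ℂ) + 2 = -N by ring] at h
  simp only [hypergeomTerm, Nat.cast_add, Nat.cast_ofNat]
  linear_combination -(poch a k * 2 ^ k / (poch (2 * a) k * k !)) * h

lemma hypergeomSum_add_two {a : ℂ} (N : ℕ) (h : ∀ j : ℕ, j ≤ N + 1 → 2 * a + j ≠ 0) :
    (2 * a + N + 1) * hypergeomSum a (N + 2) = (N + 1) * hypergeomSum a N := by
  set G : ℕ → ℂ := fun k => k * (2 * a + k - 1) * hypergeomTerm a (N + 2) k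
  have step : ∀ k ∈ range (N + 2),
      (N + 2) * ((2 * a + N + 1) * hypergeomTerm a (N + 2) k - (N + 1) * hypergeomTerm a N k)
        = G k - G (k + 1) := fun k hk_mem => by
    have hk := hypergeomTerm_succ (N + 2) k (h k (Nat.lt_succ_iff.mp (mem_range.mp hk_mem)))
    push_cast [G] at hk ⊢
    linear_combination hk - hypergeomTerm_add_two a N k
  have telescope := sum_range_sub' G (N + 2)
  rw [← sum_congr rfl step, ← mul_sum, sum_sub_distrib, ← mul_sum, ← mul_sum] at telescope
  have hN : (N + 2 : ℂ) ≠ 0 := by exact_mod_cast (N + 1).succ_ne_zero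
  have tail :
      ∑ k ∈ range (N + 1), hypergeomTerm a N k = ∑ k ∈ range (N + 2), hypergeomTerm a N k := by
    rw [sum_range_succ _ (N + 1), hypergeomTerm_eq_zero N.lt_succ_self, add_zero]
  push_cast [G] at telescope
  apply mul_left_cancel₀ hN
  rw [hypergeomSum, hypergeomSum, sum_range_succ _ (N + 2), tail]
  linear_combination telescope

lemma hypergeomSum_one {a : ℂ} (ha : a ≠ 0) : hypergeomSum a 1 = 0 := by
  have h2a : 2 * a ≠ 0 := mul_ne_zero two_ne_zero ha
  simp [hypergeomSum, hypergeomTerm, sum_range_succ, poch.succ, poch.zero, mul_comm a 2, h2a]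

lemma hypergeomSum_odd_eq_zero {a : ℂ} (n : ℕ) (h : ∀ j : ℕ, j ≤ 2 * n → 2 * a + j ≠ 0) :
    hypergeomSum a (2 * n + 1) = 0 := by
  induction n with
  | zero => exact hypergeomSum_one (by simpa using h 0 le_rfl)
  | succ n ih =>
    have recurrence := hypergeomSum_add_two (2 * n + 1) fun j hj => h j (by omega)
    rw [ih fun j hj => h j (by omega), mul_zero] at recurrence
    have hne : 2 * a + ((2 * n + 1 : ℕ) : ℂ) + 1 ≠ 0 := by
      simpa [add_assoc, one_add_one_eq_two] using h (2 * n + 2) (by omega)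
    exact (mul_eq_zero.mp recurrence).resolve_left hne

theorem stmt_16 (n : ℕ) (a : ℂ) (h : ∀ j : ℕ, j ≤ 2 * n → 2 * a + (j : ℂ) ≠ 0) :
    ∑ k ∈ Finset.range (2 * n + 2),
      poch (-((2 * n : ℂ) + 1)) k * poch a k * 2 ^ k
        / (poch (2 * a) k * (Nat.factorial k))
    = 0 := by
  simpa [hypergeomSum, hypergeomTerm] using hypergeomSum_odd_eq_zero n h
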